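/- Assume A is quadratik. Then Γ_g(Mₙ(A)) = Mₙ(A) for every g ∈ G; that is, Mₙ(A) is a G-invariant subalgebra of B under the action Γ. -/

import Mathlib

/-!
Since `A` is quadratik, every `a ∈ A` is a sum of triple products `u·v·w`, so `Mₙ(A)` is
additively spanned by the products `(L_u E_{i1})·(L_v E₁₁)·(L_w E_{1j})`. By equivariance
`Γ_g` sends such a product to `x·(L_{α_g v} E₁₁)·y` with `x, y ∈ B`, and every matrix
`x·(L_d E₁₁)·y` with entries in `𝓛_A(A)` lies in `Mₙ(A)`: right `A`-linearity gives
`x_{i1} L_d = L_{x_{i1}(d)}`, and adjointability turns `L_e y_{1j}` into a left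
multiplication. Surjectivity onto `Mₙ(A)` follows by applying this to `g⁻¹`.
-/

/-- An algebra `A` is *quadratik* if every element of `A` is a finite sum
`a₁b₁ + … + a_kb_k` of products of elements of `A`. -/
def IsQuadratik (A : Type*) [NonUnitalNonAssocSemiring A] : Prop :=
  ∀ x : A, ∃ l : List (A × A), x = (l.map fun p => p.1 * p.2).sum

/-- An algebra `A` is *faithful* if `a·b = 0` for all `b` implies `a = 0`. -/
def IsFaithful (A : Type*) [Mul A] [Zero A] : Prop :=
  ∀ a : A, (∀ b : A, a * b = 0) → a = 0

/-- Left multiplication `L_a : A → A`, `L_a(x) = a·x`, as a `ℂ`-linear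
endomorphism of `A` (an element of `𝓛_A(A)`). -/
def Lmul {A : Type*} [NonUnitalRing A] [Module ℂ A] [SMulCommClass ℂ A A]
    (a : A) : Module.End ℂ A where
  toFun x := a * x
  map_add' := mul_add a
  map_smul' c x := mul_smul_comm c a x

/-- Membership in `𝓛_A(A)`: a `ℂ`-linear endomorphism `T` of `A` belongs to
`𝓛_A(A)` iff it is right `A`-linear (`T(ab) = T(a)·b`) and adjointable (for all
`a` there is `d` with `a·T(x) = d·x` for all `x`). -/
def MemLA {A : Type*} [NonUnitalRing A] [Module ℂ A]
    (T : Module.End ℂ A) : Prop :=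
  (∀ a b : A, T (a * b) = T a * b) ∧ ∀ a : A, ∃ d : A, ∀ x : A, a * T x = d * x

/-- A matrix over `𝓛_A(A)` (i.e. over `Module.End ℂ A`) belongs to the copy of
`Mₙ(A)` iff all its entries are left multiplications `L_a` with `a ∈ A`. -/
def InMnA {A : Type*} [NonUnitalRing A] [Module ℂ A] [SMulCommClass ℂ A A]
    {n : ℕ} (X : Matrix (Fin n) (Fin n) (Module.End ℂ A)) : Prop :=
  ∀ i j, ∃ a : A, X i j = Lmul a

/-- The upper-left corner copy of `A` in `Mₙ(𝓛_A(A))`: `a ↦ L_a·E₁₁`. -/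
def cornerA {A : Type*} [NonUnitalRing A] [Module ℂ A] [SMulCommClass ℂ A A]
    {n : ℕ} [NeZero n] (a : A) : Matrix (Fin n) (Fin n) (Module.End ℂ A) :=
  Matrix.of fun i j => if i = 0 ∧ j = 0 then Lmul a else 0

/-- Identification of `Aⁿ` with the first column of `Mₙ(A)`: the vector `ξ`
corresponds to the matrix whose first column has entries `L_{ξᵢ}` and whose
other entries vanish. -/
def colMat {A : Type*} [NonUnitalRing A] [Module ℂ A] [SMulCommClass ℂ A A]
    {n : ℕ} [NeZero n] (ξ : Fin n → A) :
    Matrix (Fin n) (Fin n) (Module.End ℂ A) :=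
  Matrix.of fun i j => if j = 0 then Lmul (ξ i) else 0

lemma Lmul_zero {A : Type*} [NonUnitalRing A] [Module ℂ A]
    [SMulCommClass ℂ A A] : Lmul (0 : A) = 0 := by
  ext x
  exact zero_mul x

lemma cornerA_inMnA {A : Type*} [NonUnitalRing A] [Module ℂ A]
    [SMulCommClass ℂ A A] {n : ℕ} [NeZero n] (a : A) :
    InMnA (cornerA (n := n) a) := by
  intro i j
  by_cases h : i = 0 ∧ j = 0
  · exact ⟨a, by simp [cornerA, h]⟩
  · exact ⟨0, by simp [cornerA, h, Lmul_zero]⟩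

lemma colMat_inMnA {A : Type*} [NonUnitalRing A] [Module ℂ A]
    [SMulCommClass ℂ A A] {n : ℕ} [NeZero n] (ξ : Fin n → A) :
    InMnA (colMat ξ) := by
  intro i j
  by_cases h : j = 0
  · exact ⟨ξ i, by simp [colMat, h]⟩
  · exact ⟨0, by simp [colMat, h, Lmul_zero]⟩

section LeftMultiplication

variable {A : Type*} [NonUnitalRing A] [Module ℂ A] [SMulCommClass ℂ A A]

lemma Lmul_add (a b : A) : Lmul (a + b) = Lmul a + Lmul b := by
  ext x
  exact add_mul a b x

lemma Lmul_mul (a b : A) : Lmul (a * b) = Lmul a * Lmul b := by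
  ext x
  exact mul_assoc a b x

lemma MemLA.mul_Lmul {T : Module.End ℂ A} (hT : MemLA T) (a : A) :
    T * Lmul a = Lmul (T a) := by
  ext x
  exact hT.1 a x

lemma MemLA.exists_Lmul_mul_eq {T : Module.End ℂ A} (hT : MemLA T) (a : A) :
    ∃ d : A, Lmul a * T = Lmul d := by
  obtain ⟨d, hd⟩ := hT.2 a
  exact ⟨d, LinearMap.ext hd⟩

end LeftMultiplication

lemma IsQuadratik.mem_of_forall_mul_mem {A : Type*} [NonUnitalNonAssocSemiring A]
    (hA : IsQuadratik A) {M : AddSubmonoid A} (hM : ∀ u v : A, u * v ∈ M) (a : A) :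
    a ∈ M := by
  obtain ⟨l, rfl⟩ := hA a
  refine M.list_sum_mem fun x hx => ?_
  obtain ⟨p, -, rfl⟩ := List.mem_map.mp hx
  exact hM p.1 p.2

lemma IsQuadratik.mem_of_forall_mul_mul_mem {A : Type*} [NonUnitalNonAssocSemiring A]
    (hA : IsQuadratik A) {M : AddSubmonoid A} (hM : ∀ u v w : A, u * v * w ∈ M) (a : A) :
    a ∈ M :=
  hA.mem_of_forall_mul_mem (fun u w =>
    hA.mem_of_forall_mul_mem (M := M.comap (AddMonoidHom.mulRight w))
      (fun u₁ u₂ => hM u₁ u₂ w) u) a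

section Matrices

variable {A : Type*} [NonUnitalRing A] [Module ℂ A] [SMulCommClass ℂ A A] {n : ℕ}

variable (A n) in
def mnA : AddSubmonoid (Matrix (Fin n) (Fin n) (Module.End ℂ A)) where
  carrier := {X | InMnA X}
  zero_mem' _ _ := ⟨0, Lmul_zero.symm⟩
  add_mem' {X Y} hX hY i j := by
    obtain ⟨a, ha⟩ := hX i j
    obtain ⟨b, hb⟩ := hY i j
    exact ⟨a + b, by rw [Matrix.add_apply, ha, hb, Lmul_add]⟩

lemma single_Lmul_inMnA (i j : Fin n) (a : A) : InMnA (Matrix.single i j (Lmul a)) := by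
  intro i' j'
  by_cases h : i = i' ∧ j = j'
  · exact ⟨a, by simp [Matrix.single, h]⟩
  · exact ⟨0, by simp [Matrix.single, h, Lmul_zero]⟩

lemma mnA_le_of_forall_single_mem {M : AddSubmonoid (Matrix (Fin n) (Fin n) (Module.End ℂ A))}
    (hM : ∀ i j (a : A), Matrix.single i j (Lmul a) ∈ M) : mnA A n ≤ M := by
  intro X hX
  rw [Matrix.matrix_eq_sum_single X]
  refine sum_mem fun i _ => sum_mem fun j _ => ?_
  obtain ⟨a, ha⟩ := hX i j
  exact ha ▸ hM i j a

variable [NeZero n]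

lemma cornerA_eq_single (a : A) : cornerA (n := n) a = Matrix.single 0 0 (Lmul a) := by
  ext i j
  simp [cornerA, Matrix.single, eq_comm]

lemma mul_cornerA_mul_apply (X Y : Matrix (Fin n) (Fin n) (Module.End ℂ A)) (a : A)
    (i j : Fin n) : (X * cornerA a * Y : Matrix (Fin n) (Fin n) (Module.End ℂ A)) i j =
      X i 0 * Lmul a * Y 0 j := by
  rw [cornerA_eq_single, Matrix.mul_assoc, Matrix.mul_apply, Finset.sum_eq_single 0]
  · rw [Matrix.single_mul_apply_same, mul_assoc]
  · intro k _ hk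
    rw [Matrix.single_mul_apply_of_ne _ _ _ _ _ hk, mul_zero]
  · exact fun h => absurd (Finset.mem_univ 0) h

lemma inMnA_mul_cornerA_mul {X Y : Matrix (Fin n) (Fin n) (Module.End ℂ A)}
    (hX : ∀ i, MemLA (X i 0)) (hY : ∀ j, MemLA (Y 0 j)) (a : A) :
    InMnA (X * cornerA a * Y) := by
  intro i j
  obtain ⟨d, hd⟩ := (hY j).exists_Lmul_mul_eq (X i 0 a)
  exact ⟨d, by rw [mul_cornerA_mul_apply, (hX i).mul_Lmul, hd]⟩

lemma single_Lmul_mul_mul (i j : Fin n) (u v w : A) :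
    Matrix.single i j (Lmul (u * v * w)) =
      Matrix.single i 0 (Lmul u) * cornerA v * Matrix.single 0 j (Lmul w) := by
  rw [cornerA_eq_single, Matrix.single_mul_single_same, Matrix.single_mul_single_same,
    Lmul_mul, Lmul_mul]

lemma IsQuadratik.mnA_le (hA : IsQuadratik A)
    {M : AddSubmonoid (Matrix (Fin n) (Fin n) (Module.End ℂ A))}
    (hM : ∀ i j (u v w : A),
      Matrix.single i 0 (Lmul u) * cornerA v * Matrix.single 0 j (Lmul w) ∈ M) :
    mnA A n ≤ M :=
  mnA_le_of_forall_single_mem fun i j =>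
    hA.mem_of_forall_mul_mul_mem (M := M.comap ((Matrix.singleAddMonoidHom i j).comp
      ⟨⟨Lmul, Lmul_zero⟩, Lmul_add⟩))
      fun u v w => show Matrix.single i j (Lmul (u * v * w)) ∈ M by
        rw [single_Lmul_mul_mul]; exact hM i j u v w

end Matrices

theorem IsQuadratik.inMnA_apply_of_map_cornerA {A : Type*} [NonUnitalRing A] [Module ℂ A]
    [SMulCommClass ℂ A A] (hA : IsQuadratik A) {n : ℕ} [NeZero n]
    {B : NonUnitalSubsemiring (Matrix (Fin n) (Fin n) (Module.End ℂ A))}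
    (hB : ∀ x : B, ∀ i j, MemLA ((x : Matrix (Fin n) (Fin n) (Module.End ℂ A)) i j))
    (hMnA : ∀ X : Matrix (Fin n) (Fin n) (Module.End ℂ A), InMnA X → X ∈ B)
    (f : B →ₙ+* B)
    (hf : ∀ a : A, ∃ b : A, ((f ⟨cornerA a, hMnA _ (cornerA_inMnA a)⟩ : B) :
      Matrix (Fin n) (Fin n) (Module.End ℂ A)) = cornerA b)
    {x : B} (hx : InMnA (x : Matrix (Fin n) (Fin n) (Module.End ℂ A))) :
    InMnA (f x : Matrix (Fin n) (Fin n) (Module.End ℂ A)) := by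
  let ι : B →+ Matrix (Fin n) (Fin n) (Module.End ℂ A) := AddSubmonoidClass.subtype B
  obtain ⟨y, hy, hyx⟩ : ι x ∈ ((mnA A n).comap (ι.comp f.toAddMonoidHom)).map ι := by
    refine hA.mnA_le (fun i j u v w => ?_) hx
    obtain ⟨b, hb⟩ := hf v
    refine ⟨⟨_, hMnA _ (single_Lmul_inMnA i 0 u)⟩ * ⟨cornerA v, hMnA _ (cornerA_inMnA v)⟩ *
      ⟨_, hMnA _ (single_Lmul_inMnA 0 j w)⟩, ?_,
      by simp only [ι, AddSubmonoidClass.coe_subtype, NonUnitalSubsemiring.coe_mul]⟩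
    show InMnA (f (_ * _ * _) : Matrix (Fin n) (Fin n) (Module.End ℂ A))
    rw [map_mul, map_mul, NonUnitalSubsemiring.coe_mul, NonUnitalSubsemiring.coe_mul, hb]
    exact inMnA_mul_cornerA_mul (fun i => hB _ i 0) (fun j => hB _ 0 j) b
  rwa [Subtype.ext hyx] at hy

theorem stmt10_general (A : Type*) [NonUnitalRing A] [Module ℂ A]
    [SMulCommClass ℂ A A]
    (hquad : IsQuadratik A)
    (n : ℕ) [NeZero n]
    (G : Type*) [Group G]
    (B : NonUnitalSubalgebra ℂ (Matrix (Fin n) (Fin n) (Module.End ℂ A)))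
    (hB : ∀ x : B, ∀ i j,
      MemLA ((x : Matrix (Fin n) (Fin n) (Module.End ℂ A)) i j))
    (hMnA : ∀ X : Matrix (Fin n) (Fin n) (Module.End ℂ A), InMnA X → X ∈ B)
    (Γ : G →* RingAut B)
    (α : G →* RingAut A)
    (hequiv : ∀ (g : G) (a : A),
      ((Γ g ⟨cornerA a, hMnA _ (cornerA_inMnA a)⟩ : B) :
          Matrix (Fin n) (Fin n) (Module.End ℂ A)) = cornerA (α g a)) :
    ∀ g : G,
      (∀ (X : Matrix (Fin n) (Fin n) (Module.End ℂ A)) (hX : InMnA X),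
        InMnA ((Γ g ⟨X, hMnA X hX⟩ : B) :
            Matrix (Fin n) (Fin n) (Module.End ℂ A))) ∧
      (∀ (Y : Matrix (Fin n) (Fin n) (Module.End ℂ A)), InMnA Y →
        ∃ (X : Matrix (Fin n) (Fin n) (Module.End ℂ A)) (hX : InMnA X),
          ((Γ g ⟨X, hMnA X hX⟩ : B) :
              Matrix (Fin n) (Fin n) (Module.End ℂ A)) = Y) := by
  have hΓ (g : G) (X : Matrix (Fin n) (Fin n) (Module.End ℂ A)) (hX : InMnA X) :
      InMnA ((Γ g ⟨X, hMnA X hX⟩ : B) : Matrix (Fin n) (Fin n) (Module.End ℂ A)) :=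
    hquad.inMnA_apply_of_map_cornerA (B := B.toNonUnitalSubsemiring) hB hMnA (Γ g : B →ₙ+* B)
      (fun a => ⟨α g a, hequiv g a⟩) hX
  refine fun g => ⟨hΓ g, fun Y hY => ⟨_, hΓ g⁻¹ Y hY, ?_⟩⟩
  rw [← RingAut.mul_apply, ← map_mul, mul_inv_cancel, map_one, RingAut.one_apply]

/-- If `A` is quadratik, then `Γ_g(Mₙ(A)) = Mₙ(A)` for every `g ∈ G`; that is,
`Mₙ(A)` is a `G`-invariant subalgebra of `B` under the action `Γ`. -/
theorem stmt10 (A : Type*) [NonUnitalRing A] [Module ℂ A]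
    [SMulCommClass ℂ A A] [IsScalarTower ℂ A A]
    (hquad : IsQuadratik A)
    (n : ℕ) [NeZero n]
    (G : Type*) [Group G]
    (B : NonUnitalSubalgebra ℂ (Matrix (Fin n) (Fin n) (Module.End ℂ A)))
    (hB : ∀ x : B, ∀ i j,
      MemLA ((x : Matrix (Fin n) (Fin n) (Module.End ℂ A)) i j))
    (hMnA : ∀ X : Matrix (Fin n) (Fin n) (Module.End ℂ A), InMnA X → X ∈ B)
    (Γ : G →* RingAut B)
    (hΓlin : ∀ (g : G) (c : ℂ) (x : B), Γ g (c • x) = c • Γ g x)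
    (α : G →* RingAut A)
    (hαlin : ∀ (g : G) (c : ℂ) (a : A), α g (c • a) = c • α g a)
    (hequiv : ∀ (g : G) (a : A),
      ((Γ g ⟨cornerA a, hMnA _ (cornerA_inMnA a)⟩ : B) :
          Matrix (Fin n) (Fin n) (Module.End ℂ A)) = cornerA (α g a)) :
    ∀ g : G,
      (∀ (X : Matrix (Fin n) (Fin n) (Module.End ℂ A)) (hX : InMnA X),
        InMnA ((Γ g ⟨X, hMnA X hX⟩ : B) :
            Matrix (Fin n) (Fin n) (Module.End ℂ A))) ∧
      (∀ (Y : Matrix (Fin n) (Fin n) (Module.End ℂ A)), InMnA Y →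
        ∃ (X : Matrix (Fin n) (Fin n) (Module.End ℂ A)) (hX : InMnA X),
          ((Γ g ⟨X, hMnA X hX⟩ : B) :
              Matrix (Fin n) (Fin n) (Module.End ℂ A)) = Y) :=
  stmt10_general A hquad n G B hB hMnA Γ α hequiv
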